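/- arXiv:1509.05534 — 8 statements merged into one kernel-verified Lean document; each statement's English description precedes it below -/
import Mathlib

section
/- Suppose matrices A ∈ ℝ^{2n×2n}, B ∈ ℝ^{2n×2m}, C ∈ ℝ^{2ℓ×2n}, D ∈ ℝ^{2ℓ×2m} satisfy the physical realizability conditions A J_n + J_n Aᵀ + B J_m Bᵀ = 0, J_n Cᵀ + B J_m Dᵀ = 0, and D J_m Dᵀ = J_ℓ. Let W ∈ ℝ^{2n×2r} satisfy Wᵀ J_n W = J_r and let V = J_n W J_r^{-1} (equivalently V = J_n W (Wᵀ J_n W)^{-1}). Then the reduced matrices A_r = Wᵀ A V, B_r = Wᵀ B, C_r = C V, D_r = D satisfy A_r J_r + J_r A_rᵀ + B_r J_m B_rᵀ = 0, J_r C_rᵀ + B_r J_m D_rᵀ = 0, and D_r J_m D_rᵀ = J_ℓ. -/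
open Matrix Kronecker

noncomputable def J2 : Matrix (Fin 2) (Fin 2) ℝ := !![0, 1; -1, 0]

noncomputable def Jn (k : ℕ) : Matrix (Fin k × Fin 2) (Fin k × Fin 2) ℝ :=
  (1 : Matrix (Fin k) (Fin k) ℝ) ⊗ₖ J2

lemma J2_mul_J2 : J2 * J2 = -1 := by
  ext i j
  fin_cases i <;> fin_cases j <;>
    simp [J2, Matrix.mul_apply, Fin.sum_univ_two, Matrix.one_apply]

lemma J2_transpose : J2ᵀ = -J2 := by
  ext i j
  fin_cases i <;> fin_cases j <;> simp [J2]

lemma Jn_mul_Jn (k : ℕ) : Jn k * Jn k = -1 := by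
  rw [Jn, ← Matrix.mul_kronecker_mul, J2_mul_J2, one_mul]
  ext i j
  simp [Matrix.kroneckerMap_apply, Matrix.one_apply, Prod.ext_iff]
  rcases eq_or_ne i.1 j.1 <;> rcases eq_or_ne i.2 j.2 <;> simp_all

lemma Jn_transpose (k : ℕ) : (Jn k)ᵀ = -(Jn k) := by
  rw [Jn, ← Matrix.kroneckerMap_transpose, Matrix.transpose_one, J2_transpose]
  ext i j
  simp [Matrix.kroneckerMap_apply]

lemma Jn_inv (k : ℕ) : (Jn k)⁻¹ = -(Jn k) := by
  apply Matrix.inv_eq_right_inv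
  rw [mul_neg, Jn_mul_Jn]; simp

theorem stmt3 (n m l r : ℕ)
    (A : Matrix (Fin n × Fin 2) (Fin n × Fin 2) ℝ)
    (B : Matrix (Fin n × Fin 2) (Fin m × Fin 2) ℝ)
    (C : Matrix (Fin l × Fin 2) (Fin n × Fin 2) ℝ)
    (D : Matrix (Fin l × Fin 2) (Fin m × Fin 2) ℝ)
    (hpr1 : A * Jn n + Jn n * Aᵀ + B * Jn m * Bᵀ = 0)
    (hpr2 : Jn n * Cᵀ + B * Jn m * Dᵀ = 0)
    (hpr3 : D * Jn m * Dᵀ = Jn l)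
    (W V : Matrix (Fin n × Fin 2) (Fin r × Fin 2) ℝ)
    (hW : Wᵀ * Jn n * W = Jn r)
    (hV : V = Jn n * W * (Jn r)⁻¹)
    (Ar : Matrix (Fin r × Fin 2) (Fin r × Fin 2) ℝ)
    (Br : Matrix (Fin r × Fin 2) (Fin m × Fin 2) ℝ)
    (Cr : Matrix (Fin l × Fin 2) (Fin r × Fin 2) ℝ)
    (Dr : Matrix (Fin l × Fin 2) (Fin m × Fin 2) ℝ)
    (hAr : Ar = Wᵀ * A * V) (hBr : Br = Wᵀ * B) (hCr : Cr = C * V) (hDr : Dr = D) :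
    Ar * Jn r + Jn r * Arᵀ + Br * Jn m * Brᵀ = 0 ∧
    Jn r * Crᵀ + Br * Jn m * Drᵀ = 0 ∧
    Dr * Jn m * Drᵀ = Jn l := by
  have hinv : (Jn r)⁻¹ * Jn r = 1 := by
    rw [Jn_inv, neg_mul, Jn_mul_Jn, neg_neg]
  have h1 : V * Jn r = Jn n * W := by
    rw [hV, Matrix.mul_assoc, hinv, Matrix.mul_one]
  have h2 : Jn r * Vᵀ = Wᵀ * Jn n := by
    rw [hV]
    simp only [Matrix.transpose_mul, Jn_inv, Jn_transpose, Matrix.transpose_neg, neg_neg,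
      Matrix.mul_neg, Matrix.neg_mul]
    rw [← Matrix.mul_assoc, ← Matrix.mul_assoc, Jn_mul_Jn]
    simp [Matrix.mul_assoc]
  subst hAr hBr hCr hDr
  refine ⟨?_, ?_, hpr3⟩
  · calc Wᵀ * A * V * Jn r + Jn r * (Wᵀ * A * V)ᵀ + Wᵀ * B * Jn m * (Wᵀ * B)ᵀ
        = Wᵀ * (A * Jn n + Jn n * Aᵀ + B * Jn m * Bᵀ) * W := by
          simp only [Matrix.transpose_mul, Matrix.transpose_transpose]
          rw [Matrix.mul_assoc (Wᵀ * A) V (Jn r), h1,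
            ← Matrix.mul_assoc (Jn r) Vᵀ (Aᵀ * W), h2]
          rw [Matrix.mul_add, Matrix.mul_add, Matrix.add_mul, Matrix.add_mul]
          simp only [Matrix.mul_assoc]
      _ = 0 := by rw [hpr1, Matrix.mul_zero, Matrix.zero_mul]
  · calc Jn r * (C * V)ᵀ + Wᵀ * B * Jn m * Drᵀ
        = Wᵀ * (Jn n * Cᵀ + B * Jn m * Drᵀ) := by
          rw [Matrix.transpose_mul, ← Matrix.mul_assoc, h2]
          rw [Matrix.mul_add]
          simp only [Matrix.mul_assoc]
      _ = 0 := by rw [hpr2, Matrix.mul_zero]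
end

section
/- Let A ∈ ℝ^{2n×2n}, B ∈ ℝ^{2n×2m}, C ∈ ℝ^{2ℓ×2n}, and W, V ∈ ℝ^{2n×2r} with Wᵀ V = I. Set A_r = Wᵀ A V, B_r = Wᵀ B, C_r = C V. For any s ∈ ℂ that is not an eigenvalue of A or A_r, C (sI - A)^{-1} B - C_r (sI - A_r)^{-1} B_r = C (sI - A)^{-1} (I - Q(s)) B, where Q(s) = (sI - A) V (sI - A_r)^{-1} Wᵀ. -/
open Matrix

theorem stmt6 (n m l r : ℕ)
    (A : Matrix (Fin n × Fin 2) (Fin n × Fin 2) ℝ)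
    (B : Matrix (Fin n × Fin 2) (Fin m × Fin 2) ℝ)
    (C : Matrix (Fin l × Fin 2) (Fin n × Fin 2) ℝ)
    (W V : Matrix (Fin n × Fin 2) (Fin r × Fin 2) ℝ)
    (hWV : Wᵀ * V = 1)
    (Ac : Matrix (Fin n × Fin 2) (Fin n × Fin 2) ℂ)
    (Bc : Matrix (Fin n × Fin 2) (Fin m × Fin 2) ℂ)
    (Cc : Matrix (Fin l × Fin 2) (Fin n × Fin 2) ℂ)
    (Wc Vc : Matrix (Fin n × Fin 2) (Fin r × Fin 2) ℂ)
    (hAc : Ac = A.map (Complex.ofReal ·)) (hBc : Bc = B.map (Complex.ofReal ·))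
    (hCc : Cc = C.map (Complex.ofReal ·))
    (hWc : Wc = W.map (Complex.ofReal ·)) (hVc : Vc = V.map (Complex.ofReal ·))
    (Arc : Matrix (Fin r × Fin 2) (Fin r × Fin 2) ℂ)
    (Brc : Matrix (Fin r × Fin 2) (Fin m × Fin 2) ℂ)
    (Crc : Matrix (Fin l × Fin 2) (Fin r × Fin 2) ℂ)
    (hArc : Arc = Wcᵀ * Ac * Vc) (hBrc : Brc = Wcᵀ * Bc) (hCrc : Crc = Cc * Vc)
    (s : ℂ) (hs : s ∉ spectrum ℂ Ac) (hsr : s ∉ spectrum ℂ Arc)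
    (Q : Matrix (Fin n × Fin 2) (Fin n × Fin 2) ℂ)
    (hQ : Q = (s • 1 - Ac) * Vc * (s • 1 - Arc)⁻¹ * Wcᵀ) :
    Cc * (s • 1 - Ac)⁻¹ * Bc - Crc * (s • 1 - Arc)⁻¹ * Brc
      = Cc * (s • 1 - Ac)⁻¹ * (1 - Q) * Bc := by
  have hM : IsUnit (s • (1 : Matrix (Fin n × Fin 2) (Fin n × Fin 2) ℂ) - Ac) := by
    rw [spectrum.notMem_iff, Algebra.algebraMap_eq_smul_one] at hs
    exact hs
  have h1 : (s • 1 - Ac)⁻¹ * (s • 1 - Ac) = 1 :=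
    Matrix.nonsing_inv_mul _ ((Matrix.isUnit_iff_isUnit_det _).mp hM)
  subst hQ hBrc hCrc
  rw [Matrix.mul_sub, Matrix.mul_one, Matrix.sub_mul]
  have : Cc * (s • 1 - Ac)⁻¹ * ((s • 1 - Ac) * Vc * (s • 1 - Arc)⁻¹ * Wcᵀ) * Bc
      = Cc * Vc * ((s • 1 - Arc)⁻¹ * (Wcᵀ * Bc)) := by
    rw [show Cc * (s • 1 - Ac)⁻¹ * ((s • 1 - Ac) * Vc * (s • 1 - Arc)⁻¹ * Wcᵀ) * Bc
        = Cc * ((s • 1 - Ac)⁻¹ * (s • 1 - Ac)) * Vc * ((s • 1 - Arc)⁻¹ * (Wcᵀ * Bc)) by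
      simp only [Matrix.mul_assoc], h1, Matrix.mul_one]
  rw [this, Matrix.mul_assoc, Matrix.mul_assoc]
end

section
/- Let A ∈ ℝ^{2n×2n}, B ∈ ℝ^{2n×2m}, C ∈ ℝ^{2ℓ×2n}, W, V ∈ ℝ^{2n×2r} with Wᵀ V = I, and A_r = Wᵀ A V, B_r = Wᵀ B, C_r = C V. For any s ∈ ℂ not an eigenvalue of A or A_r, C (sI - A)^{-1} B - C_r (sI - A_r)^{-1} B_r = C (I - R(s)) (sI - A)^{-1} B, where R(s) = V (sI - A_r)^{-1} Wᵀ (sI - A). -/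
open Matrix

theorem stmt7 (n m l r : ℕ)
    (A : Matrix (Fin n × Fin 2) (Fin n × Fin 2) ℝ)
    (B : Matrix (Fin n × Fin 2) (Fin m × Fin 2) ℝ)
    (C : Matrix (Fin l × Fin 2) (Fin n × Fin 2) ℝ)
    (W V : Matrix (Fin n × Fin 2) (Fin r × Fin 2) ℝ)
    (hWV : Wᵀ * V = 1)
    (Ac : Matrix (Fin n × Fin 2) (Fin n × Fin 2) ℂ)
    (Bc : Matrix (Fin n × Fin 2) (Fin m × Fin 2) ℂ)
    (Cc : Matrix (Fin l × Fin 2) (Fin n × Fin 2) ℂ)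
    (Wc Vc : Matrix (Fin n × Fin 2) (Fin r × Fin 2) ℂ)
    (hAc : Ac = A.map (Complex.ofReal ·)) (hBc : Bc = B.map (Complex.ofReal ·))
    (hCc : Cc = C.map (Complex.ofReal ·))
    (hWc : Wc = W.map (Complex.ofReal ·)) (hVc : Vc = V.map (Complex.ofReal ·))
    (Arc : Matrix (Fin r × Fin 2) (Fin r × Fin 2) ℂ)
    (Brc : Matrix (Fin r × Fin 2) (Fin m × Fin 2) ℂ)
    (Crc : Matrix (Fin l × Fin 2) (Fin r × Fin 2) ℂ)
    (hArc : Arc = Wcᵀ * Ac * Vc) (hBrc : Brc = Wcᵀ * Bc) (hCrc : Crc = Cc * Vc)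
    (s : ℂ) (hs : s ∉ spectrum ℂ Ac) (hsr : s ∉ spectrum ℂ Arc)
    (Q : Matrix (Fin n × Fin 2) (Fin n × Fin 2) ℂ)
    (hQ : Q = Vc * (s • 1 - Arc)⁻¹ * Wcᵀ * (s • 1 - Ac)) :
    Cc * (s • 1 - Ac)⁻¹ * Bc - Crc * (s • 1 - Arc)⁻¹ * Brc
      = Cc * (1 - Q) * (s • 1 - Ac)⁻¹ * Bc := by
  have h1 : IsUnit (s • (1 : Matrix (Fin n × Fin 2) (Fin n × Fin 2) ℂ) - Ac) := by
    rw [spectrum.notMem_iff] at hs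
    simpa [Algebra.algebraMap_eq_smul_one] using hs
  have h2 : (s • 1 - Ac) * (s • 1 - Ac)⁻¹ = 1 :=
    Matrix.mul_nonsing_inv _ ((Matrix.isUnit_iff_isUnit_det _).mp h1)
  have hQR : Q * (s • 1 - Ac)⁻¹ = Vc * (s • 1 - Arc)⁻¹ * Wcᵀ := by
    rw [hQ, mul_assoc, h2, mul_one]
  rw [Matrix.mul_sub Cc, Matrix.mul_one, Matrix.sub_mul, Matrix.sub_mul, Matrix.mul_assoc Cc Q, hQR, hCrc, hBrc]
  simp [Matrix.mul_assoc]
end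

section
/- Suppose F ∈ ℂ^{n×n}, G ∈ ℂ^{n×m}, H ∈ ℂ^{ℓ×n}, K ∈ ℂ^{ℓ×m} satisfy F + F† + G G† = 0 and H† + G K† = 0, and let V ∈ ℂ^{n×r} be orthonormal (V† V = I_r). Then F_r = V† F V, G_r = V† G, H_r = H V, K_r = K satisfy F_r + F_r† + G_r G_r† = 0 and H_r† + G_r K_r† = 0. -/
open Matrix

theorem stmt9 (n m l r : ℕ)
    (F : Matrix (Fin n) (Fin n) ℂ) (G : Matrix (Fin n) (Fin m) ℂ)
    (H : Matrix (Fin l) (Fin n) ℂ) (K : Matrix (Fin l) (Fin m) ℂ)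
    (hpr1 : F + Fᴴ + G * Gᴴ = 0) (hpr2 : Hᴴ + G * Kᴴ = 0)
    (V : Matrix (Fin n) (Fin r) ℂ) (hV : Vᴴ * V = 1)
    (Fr : Matrix (Fin r) (Fin r) ℂ) (Gr : Matrix (Fin r) (Fin m) ℂ)
    (Hr : Matrix (Fin l) (Fin r) ℂ) (Kr : Matrix (Fin l) (Fin m) ℂ)
    (hFr : Fr = Vᴴ * F * V) (hGr : Gr = Vᴴ * G) (hHr : Hr = H * V) (hKr : Kr = K) :
    Fr + Frᴴ + Gr * Grᴴ = 0 ∧ Hrᴴ + Gr * Krᴴ = 0 := by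
  subst hFr hGr hHr hKr
  constructor
  · have : Vᴴ * F * V + (Vᴴ * F * V)ᴴ + Vᴴ * G * (Vᴴ * G)ᴴ
        = Vᴴ * (F + Fᴴ + G * Gᴴ) * V := by
      simp only [conjTranspose_mul, conjTranspose_conjTranspose, Matrix.mul_add,
        Matrix.add_mul, Matrix.mul_assoc]
    rw [this, hpr1, Matrix.mul_zero, Matrix.zero_mul]
  · have : (H * V)ᴴ + Vᴴ * G * Krᴴ = Vᴴ * (Hᴴ + G * Krᴴ) := by
      simp only [conjTranspose_mul, Matrix.mul_add, Matrix.mul_assoc]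
    rw [this, hpr2, Matrix.mul_zero]
end

section
/- Let F_r ∈ ℂ^{r×r}, G_r ∈ ℂ^{r×m}, K_r ∈ ℂ^{ℓ×m} satisfy F_r + F_r† + G_r G_r† = 0 and H_r = -K_r G_r†. If z is an eigenvector of F_r with purely imaginary eigenvalue iω (ω ∈ ℝ), then G_r† z = 0 and hence H_r z = 0. -/
open Matrix

theorem stmt11 (r m l : ℕ)
    (Fr : Matrix (Fin r) (Fin r) ℂ) (Gr : Matrix (Fin r) (Fin m) ℂ)
    (Kr : Matrix (Fin l) (Fin m) ℂ) (Hr : Matrix (Fin l) (Fin r) ℂ)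
    (hpr : Fr + Frᴴ + Gr * Grᴴ = 0) (hHr : Hr = -(Kr * Grᴴ))
    (ω : ℝ) (z : Fin r → ℂ) (hz : z ≠ 0)
    (heig : Fr.mulVec z = (Complex.I * ω) • z) :
    Grᴴ.mulVec z = 0 ∧ Hr.mulVec z = 0 := by
  set w := Grᴴ.mulVec z with hw
  have h0 : star z ⬝ᵥ ((Fr + Frᴴ + Gr * Grᴴ).mulVec z) = 0 := by
    rw [hpr]; simp
  have h1 : star z ⬝ᵥ Fr.mulVec z = (Complex.I * ω) * (star z ⬝ᵥ z) := by
    rw [heig, dotProduct_smul, smul_eq_mul]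
  have h2 : star z ⬝ᵥ Frᴴ.mulVec z = star (star z ⬝ᵥ Fr.mulVec z) := by
    rw [star_dotProduct, Matrix.star_mulVec, Matrix.conjTranspose_conjTranspose,
      Matrix.dotProduct_mulVec]
  have h3 : star z ⬝ᵥ (Gr * Grᴴ).mulVec z = star w ⬝ᵥ w := by
    rw [← Matrix.mulVec_mulVec, Matrix.dotProduct_mulVec, hw, Matrix.star_mulVec,
      Matrix.conjTranspose_conjTranspose]
  have hc : star (star z ⬝ᵥ z) = star z ⬝ᵥ z := (star_dotProduct z z).symm
  have hs : star ((Complex.I * ↑ω) * (star z ⬝ᵥ z))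
      = -((Complex.I * ↑ω) * (star z ⬝ᵥ z)) := by
    rw [star_mul', star_mul', hc]
    simp only [Complex.star_def, Complex.conj_I, Complex.conj_ofReal]
    ring
  have hww : star w ⬝ᵥ w = 0 := by
    have h := h0
    rw [Matrix.add_mulVec, Matrix.add_mulVec, dotProduct_add, dotProduct_add,
      h1, h2, h1, h3, hs] at h
    linear_combination h
  have hw0 : w = 0 := by
    funext i
    have h := congrArg Complex.re hww
    simp only [dotProduct, Pi.star_apply, Complex.star_def,
      ← Complex.normSq_eq_conj_mul_self, Complex.re_sum, Complex.ofReal_re,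
      Pi.zero_apply, Complex.zero_re] at h
    have hi := (Finset.sum_eq_zero_iff_of_nonneg
      (fun j _ => Complex.normSq_nonneg (w j))).mp h i (Finset.mem_univ i)
    simpa using Complex.normSq_eq_zero.mp hi
  refine ⟨hw0, ?_⟩
  rw [hHr, Matrix.neg_mulVec, ← Matrix.mulVec_mulVec, ← hw, hw0]
  simp
end

section
/- Let W ∈ ℝ^{2n×2r} have full column rank, let A ∈ ℝ^{2n×2n}, C ∈ ℝ^{2ℓ×2n}, and suppose for each i = 1,…,2r that σ_i ∈ ℂ is not an eigenvalue of A, μ_i ∈ ℂ^{2ℓ}, and (μ_i† C (σ_i I - A)^{-1})† lies in the column space of W (viewed in ℂ^{2n}). Let V ∈ ℝ^{2n×2r} satisfy Wᵀ V = I, and define A_r = Wᵀ A V, B_r = Wᵀ B, C_r = C V for B ∈ ℝ^{2n×2m}. Then for every i with σ_i not an eigenvalue of A_r, μ_i† C_r (σ_i I - A_r)^{-1} B_r = μ_i† C (σ_i I - A)^{-1} B. -/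
open Matrix

theorem stmt14 (n m l r : ℕ)
    (A : Matrix (Fin n × Fin 2) (Fin n × Fin 2) ℝ)
    (B : Matrix (Fin n × Fin 2) (Fin m × Fin 2) ℝ)
    (C : Matrix (Fin l × Fin 2) (Fin n × Fin 2) ℝ)
    (W V : Matrix (Fin n × Fin 2) (Fin r × Fin 2) ℝ)
    (hrank : LinearIndependent ℝ (fun i => (fun j => W j i)))
    (hWV : Wᵀ * V = 1)
    (Ac : Matrix (Fin n × Fin 2) (Fin n × Fin 2) ℂ)
    (Bc : Matrix (Fin n × Fin 2) (Fin m × Fin 2) ℂ)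
    (Cc : Matrix (Fin l × Fin 2) (Fin n × Fin 2) ℂ)
    (Wc Vc : Matrix (Fin n × Fin 2) (Fin r × Fin 2) ℂ)
    (hAc : Ac = A.map (Complex.ofReal ·)) (hBc : Bc = B.map (Complex.ofReal ·))
    (hCc : Cc = C.map (Complex.ofReal ·))
    (hWc : Wc = W.map (Complex.ofReal ·)) (hVc : Vc = V.map (Complex.ofReal ·))
    (σ : Fin (2 * r) → ℂ) (μ : Fin (2 * r) → Fin l × Fin 2 → ℂ)
    (hσ : ∀ i, σ i ∉ spectrum ℂ Ac)
    (hmem : ∀ i,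
      ((σ i • (1 : Matrix (Fin n × Fin 2) (Fin n × Fin 2) ℂ) - Ac)⁻¹)ᴴ.mulVec
          (Ccᴴ.mulVec (μ i))
        ∈ Submodule.span ℂ (Set.range fun k => (fun j => Wc j k)))
    (Arc : Matrix (Fin r × Fin 2) (Fin r × Fin 2) ℂ)
    (Brc : Matrix (Fin r × Fin 2) (Fin m × Fin 2) ℂ)
    (Crc : Matrix (Fin l × Fin 2) (Fin r × Fin 2) ℂ)
    (hArc : Arc = Wcᵀ * Ac * Vc) (hBrc : Brc = Wcᵀ * Bc) (hCrc : Crc = Cc * Vc) :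
    ∀ i, σ i ∉ spectrum ℂ Arc →
      Matrix.vecMul (star (μ i)) (Crc * (σ i • 1 - Arc)⁻¹ * Brc)
        = Matrix.vecMul (star (μ i)) (Cc * (σ i • 1 - Ac)⁻¹ * Bc) := by

  intro i hi
  have hm := hmem i
  set E : Matrix (Fin n × Fin 2) (Fin n × Fin 2) ℂ := σ i • 1 - Ac with hEdef
  set Er : Matrix (Fin r × Fin 2) (Fin r × Fin 2) ℂ := σ i • 1 - Arc with hErdef
  have hE : IsUnit E.det := by
    have h := spectrum.notMem_iff.mp (hσ i)
    rw [Algebra.algebraMap_eq_smul_one] at h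
    exact (Matrix.isUnit_iff_isUnit_det _).mp h
  have hEr : IsUnit Er.det := by
    have h := spectrum.notMem_iff.mp hi
    rw [Algebra.algebraMap_eq_smul_one] at h
    exact (Matrix.isUnit_iff_isUnit_det _).mp h
  have hWH : Wcᴴ = Wcᵀ := by
    subst hWc
    ext j k
    simp [Matrix.conjTranspose_apply, Matrix.map_apply]
  have hWVc : Wcᵀ * Vc = 1 := by
    have hW' : Wc = W.map Complex.ofRealHom := hWc
    have hV' : Vc = V.map Complex.ofRealHom := hVc
    rw [hW', hV', ← Matrix.transpose_map, ← Matrix.map_mul, hWV,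
      Matrix.map_one _ (map_zero _) (map_one _)]
  obtain ⟨c, hc⟩ := (Submodule.mem_span_range_iff_exists_fun ℂ).mp hm
  have hc' : Wc.mulVec c = (E⁻¹)ᴴ.mulVec (Ccᴴ.mulVec (μ i)) := by
    rw [← hc]
    ext j
    simp [Matrix.mulVec, dotProduct, Finset.sum_apply, mul_comm]
  have h1 : Matrix.vecMul (star (μ i)) (Cc * E⁻¹) = Matrix.vecMul (star c) Wcᵀ := by
    have h := congrArg star hc'
    rw [Matrix.star_mulVec, Matrix.star_mulVec, Matrix.star_mulVec,
      Matrix.vecMul_vecMul] at h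
    simp only [Matrix.conjTranspose_conjTranspose] at h
    rw [hWH] at h
    exact h.symm
  have h2 : Matrix.vecMul (star (μ i)) Cc = Matrix.vecMul (star c) (Wcᵀ * E) := by
    have h := congrArg (fun v => Matrix.vecMul v E) h1
    simp only [Matrix.vecMul_vecMul] at h
    rw [Matrix.mul_assoc, Matrix.nonsing_inv_mul _ hE, Matrix.mul_one] at h
    exact h
  have h3 : Wcᵀ * E * Vc = Er := by
    rw [hEdef, hErdef, hArc, Matrix.mul_sub, Matrix.sub_mul, Matrix.mul_smul,
      Matrix.mul_one, Matrix.smul_mul, hWVc]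
  have h4 : Matrix.vecMul (star (μ i)) Crc = Matrix.vecMul (star c) Er := by
    rw [hCrc, ← Matrix.vecMul_vecMul, h2, Matrix.vecMul_vecMul, h3]
  have hL : Matrix.vecMul (star (μ i)) (Crc * Er⁻¹ * Brc) = Matrix.vecMul (star c) Brc := by
    rw [← Matrix.vecMul_vecMul, ← Matrix.vecMul_vecMul, h4,
      Matrix.vecMul_vecMul (star c) Er Er⁻¹, Matrix.mul_nonsing_inv _ hEr,
      Matrix.vecMul_one]
  have hR : Matrix.vecMul (star (μ i)) (Cc * E⁻¹ * Bc) = Matrix.vecMul (star c) Brc := by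
    rw [← Matrix.vecMul_vecMul, h1, Matrix.vecMul_vecMul, ← hBrc]
  rw [hL, hR]
end

section
/- Let V ∈ ℝ^{2n×2r} have full column rank, A ∈ ℝ^{2n×2n}, B ∈ ℝ^{2n×2m}, and suppose for each i = 1,…,2r that σ_i ∈ ℂ is not an eigenvalue of A, ν_i ∈ ℂ^{2m}, and (σ_i I - A)^{-1} B ν_i lies in the complex column space of V. Let W ∈ ℝ^{2n×2r} satisfy Wᵀ V = I, and define A_r = Wᵀ A V, B_r = Wᵀ B, C_r = C V for C ∈ ℝ^{2ℓ×2n}. Then for every i with σ_i not an eigenvalue of A_r, C_r (σ_i I - A_r)^{-1} B_r ν_i = C (σ_i I - A)^{-1} B ν_i. -/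
open Matrix

theorem stmt15 (n m l r : ℕ)
    (A : Matrix (Fin n × Fin 2) (Fin n × Fin 2) ℝ)
    (B : Matrix (Fin n × Fin 2) (Fin m × Fin 2) ℝ)
    (C : Matrix (Fin l × Fin 2) (Fin n × Fin 2) ℝ)
    (W V : Matrix (Fin n × Fin 2) (Fin r × Fin 2) ℝ)
    (hrank : LinearIndependent ℝ (fun i => (fun j => V j i)))
    (hWV : Wᵀ * V = 1)
    (Ac : Matrix (Fin n × Fin 2) (Fin n × Fin 2) ℂ)
    (Bc : Matrix (Fin n × Fin 2) (Fin m × Fin 2) ℂ)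
    (Cc : Matrix (Fin l × Fin 2) (Fin n × Fin 2) ℂ)
    (Wc Vc : Matrix (Fin n × Fin 2) (Fin r × Fin 2) ℂ)
    (hAc : Ac = A.map (Complex.ofReal ·)) (hBc : Bc = B.map (Complex.ofReal ·))
    (hCc : Cc = C.map (Complex.ofReal ·))
    (hWc : Wc = W.map (Complex.ofReal ·)) (hVc : Vc = V.map (Complex.ofReal ·))
    (σ : Fin (2 * r) → ℂ) (ν : Fin (2 * r) → Fin m × Fin 2 → ℂ)
    (hσ : ∀ i, σ i ∉ spectrum ℂ Ac)
    (hmem : ∀ i,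
      ((σ i • (1 : Matrix (Fin n × Fin 2) (Fin n × Fin 2) ℂ) - Ac)⁻¹).mulVec
          (Bc.mulVec (ν i))
        ∈ Submodule.span ℂ (Set.range fun k => (fun j => Vc j k)))
    (Arc : Matrix (Fin r × Fin 2) (Fin r × Fin 2) ℂ)
    (Brc : Matrix (Fin r × Fin 2) (Fin m × Fin 2) ℂ)
    (Crc : Matrix (Fin l × Fin 2) (Fin r × Fin 2) ℂ)
    (hArc : Arc = Wcᵀ * Ac * Vc) (hBrc : Brc = Wcᵀ * Bc) (hCrc : Crc = Cc * Vc) :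
    ∀ i, σ i ∉ spectrum ℂ Arc →
      (Crc * (σ i • 1 - Arc)⁻¹ * Brc).mulVec (ν i)
        = (Cc * (σ i • 1 - Ac)⁻¹ * Bc).mulVec (ν i) := by
  intro i hi
  set s := σ i with hs
  -- invertibility of s•1 - Ac
  have hA : IsUnit (s • (1 : Matrix (Fin n × Fin 2) (Fin n × Fin 2) ℂ) - Ac) := by
    have := (spectrum.notMem_iff).mp (hσ i)
    simpa [Algebra.algebraMap_eq_smul_one] using this
  have hAr : IsUnit (s • (1 : Matrix (Fin r × Fin 2) (Fin r × Fin 2) ℂ) - Arc) := by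
    have := (spectrum.notMem_iff).mp hi
    simpa [Algebra.algebraMap_eq_smul_one] using this
  have hAdet : IsUnit (s • (1 : Matrix (Fin n × Fin 2) (Fin n × Fin 2) ℂ) - Ac).det :=
    (Matrix.isUnit_iff_isUnit_det _).mp hA
  have hArdet : IsUnit (s • (1 : Matrix (Fin r × Fin 2) (Fin r × Fin 2) ℂ) - Arc).det :=
    (Matrix.isUnit_iff_isUnit_det _).mp hAr
  -- WᵀV = 1 over ℂ
  have hWVc : Wcᵀ * Vc = 1 := by
    subst hWc hVc
    rw [← Matrix.transpose_map]
    have : (Wᵀ.map fun x => (x : ℂ)) * (V.map fun x => (x : ℂ))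
        = (Wᵀ * V).map (Complex.ofRealHom) := by
      rw [Matrix.map_mul]; rfl
    rw [this, hWV]
    ext j k
    simp [Matrix.one_apply, apply_ite Complex.ofRealHom]
  set x := ((s • (1 : Matrix (Fin n × Fin 2) (Fin n × Fin 2) ℂ) - Ac)⁻¹).mulVec
      (Bc.mulVec (ν i)) with hx
  obtain ⟨c, hc⟩ := (Finsupp.mem_span_range_iff_exists_finsupp).mp (hmem i)
  rw [← hs] at hc
  have hxV : Vc.mulVec (fun k => c k) = x := by
    rw [hx, ← hc]
    ext j
    rw [Finsupp.sum_fintype]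
    · simp [Matrix.mulVec, dotProduct, mul_comm]
    · intro; simp
  have hAx : (s • (1 : Matrix (Fin n × Fin 2) (Fin n × Fin 2) ℂ) - Ac).mulVec x
      = Bc.mulVec (ν i) := by
    rw [hx, Matrix.mulVec_mulVec, Matrix.mul_nonsing_inv _ hAdet, Matrix.one_mulVec]
  -- project: (s•1 - Arc) c = Brc ν
  have hkey : (s • (1 : Matrix (Fin r × Fin 2) (Fin r × Fin 2) ℂ) - Arc).mulVec
      (fun k => c k) = Brc.mulVec (ν i) := by
    have h1 : Wcᵀ.mulVec ((s • (1 : Matrix (Fin n × Fin 2) (Fin n × Fin 2) ℂ) - Ac).mulVec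
        (Vc.mulVec (fun k => c k))) = Wcᵀ.mulVec (Bc.mulVec (ν i)) := by
      rw [hxV, hAx]
    rw [Matrix.mulVec_mulVec, Matrix.mulVec_mulVec, Matrix.mulVec_mulVec] at h1
    rw [hBrc]
    rw [show Wcᵀ * (s • (1 : Matrix (Fin n × Fin 2) (Fin n × Fin 2) ℂ) - Ac) * Vc
        = s • (1 : Matrix (Fin r × Fin 2) (Fin r × Fin 2) ℂ) - Arc by
      rw [hArc, Matrix.mul_sub, Matrix.sub_mul, Matrix.mul_smul, Matrix.smul_mul,
        Matrix.mul_one, hWVc]] at h1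
    exact h1
  have hcval : (fun k => c k)
      = ((s • (1 : Matrix (Fin r × Fin 2) (Fin r × Fin 2) ℂ) - Arc)⁻¹).mulVec
        (Brc.mulVec (ν i)) := by
    rw [← hkey, Matrix.mulVec_mulVec, Matrix.nonsing_inv_mul _ hArdet, Matrix.one_mulVec]
  calc (Crc * (s • 1 - Arc)⁻¹ * Brc).mulVec (ν i)
      = Crc.mulVec (((s • 1 - Arc)⁻¹).mulVec (Brc.mulVec (ν i))) := by
        rw [Matrix.mulVec_mulVec, Matrix.mulVec_mulVec]
    _ = Crc.mulVec (fun k => c k) := by rw [← hcval]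
    _ = Cc.mulVec x := by rw [hCrc, ← Matrix.mulVec_mulVec, hxV]
    _ = (Cc * (s • 1 - Ac)⁻¹ * Bc).mulVec (ν i) := by
        rw [hx, Matrix.mulVec_mulVec, Matrix.mulVec_mulVec]
end

section
/- Let F ∈ ℂ^{n×n}, G ∈ ℂ^{n×m}, H ∈ ℂ^{ℓ×n}, K ∈ ℂ^{ℓ×m} with ℓ ≤ m satisfy F + F† + GG† = 0, H† + GK† = 0, and suppose K̂ ∈ ℂ^{(m-ℓ)×m} makes K̃ = [K; K̂] unitary. Define Ĥ = -K̂ G†. Then the augmented matrices H̃ = [H; Ĥ] and K̃ satisfy H̃† + G K̃† = 0, so the augmented square system (F, G, H̃, K̃) satisfies all physical realizability conditions F + F† + GG† = 0, H̃† + G K̃† = 0, K̃ K̃† = K̃† K̃ = I. -/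
open Matrix

section

variable {α n m l₁ l₂ : Type*} [Fintype m] [Ring α] [StarRing α]

theorem conjTranspose_fromRows_add_mul_conjTranspose_fromRows
    (G : Matrix n m α) (H₁ : Matrix l₁ n α) (H₂ : Matrix l₂ n α)
    (K₁ : Matrix l₁ m α) (K₂ : Matrix l₂ m α) :
    (fromRows H₁ H₂)ᴴ + G * (fromRows K₁ K₂)ᴴ = fromCols (H₁ᴴ + G * K₁ᴴ) (H₂ᴴ + G * K₂ᴴ) := by
  rw [conjTranspose_fromRows_eq_fromCols_conjTranspose, conjTranspose_fromRows_eq_fromCols_conjTranspose,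
    mul_fromCols]
  ext i (j | j) <;> rfl

theorem conjTranspose_neg_mul_conjTranspose_add_mul_conjTranspose
    (G : Matrix n m α) (K : Matrix l₁ m α) :
    (-(K * Gᴴ))ᴴ + G * Kᴴ = 0 := by
  rw [conjTranspose_neg, conjTranspose_mul, conjTranspose_conjTranspose, neg_add_cancel]

end

theorem stmt17_general (n m l : ℕ)
    (F : Matrix (Fin n) (Fin n) ℂ) (G : Matrix (Fin n) (Fin m) ℂ)
    (H : Matrix (Fin l) (Fin n) ℂ) (K : Matrix (Fin l) (Fin m) ℂ)
    (hpr1 : F + Fᴴ + G * Gᴴ = 0) (hpr2 : Hᴴ + G * Kᴴ = 0)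
    (Khat : Matrix (Fin (m - l)) (Fin m) ℂ)
    (hKt1 : Matrix.fromRows K Khat * (Matrix.fromRows K Khat)ᴴ = 1)
    (hKt2 : (Matrix.fromRows K Khat)ᴴ * Matrix.fromRows K Khat = 1)
    (Hhat : Matrix (Fin (m - l)) (Fin n) ℂ) (hHhat : Hhat = -(Khat * Gᴴ)) :
    (Matrix.fromRows H Hhat)ᴴ + G * (Matrix.fromRows K Khat)ᴴ = 0 ∧
    F + Fᴴ + G * Gᴴ = 0 ∧
    Matrix.fromRows K Khat * (Matrix.fromRows K Khat)ᴴ = 1 ∧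
    (Matrix.fromRows K Khat)ᴴ * Matrix.fromRows K Khat = 1 := by
  refine ⟨?_, hpr1, hKt1, hKt2⟩
  rw [conjTranspose_fromRows_add_mul_conjTranspose_fromRows, hpr2, hHhat,
    conjTranspose_neg_mul_conjTranspose_add_mul_conjTranspose, fromCols_zero]

theorem stmt17 (n m l : ℕ) (hlm : l ≤ m)
    (F : Matrix (Fin n) (Fin n) ℂ) (G : Matrix (Fin n) (Fin m) ℂ)
    (H : Matrix (Fin l) (Fin n) ℂ) (K : Matrix (Fin l) (Fin m) ℂ)
    (hpr1 : F + Fᴴ + G * Gᴴ = 0) (hpr2 : Hᴴ + G * Kᴴ = 0)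
    (Khat : Matrix (Fin (m - l)) (Fin m) ℂ)
    (hKt1 : Matrix.fromRows K Khat * (Matrix.fromRows K Khat)ᴴ = 1)
    (hKt2 : (Matrix.fromRows K Khat)ᴴ * Matrix.fromRows K Khat = 1)
    (Hhat : Matrix (Fin (m - l)) (Fin n) ℂ) (hHhat : Hhat = -(Khat * Gᴴ)) :
    (Matrix.fromRows H Hhat)ᴴ + G * (Matrix.fromRows K Khat)ᴴ = 0 ∧
    F + Fᴴ + G * Gᴴ = 0 ∧
    Matrix.fromRows K Khat * (Matrix.fromRows K Khat)ᴴ = 1 ∧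
    (Matrix.fromRows K Khat)ᴴ * Matrix.fromRows K Khat = 1 :=
  stmt17_general n m l F G H K hpr1 hpr2 Khat hKt1 hKt2 Hhat hHhat
end
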